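/- Let G₁ and G₂ be finite groups with |G₁| = |G₂|, and let H₁ be a normal subgroup of G₁ and H₂ a normal subgroup of G₂ with |H₁| = |H₂|. Then the graphs Γ_{H₁}(G₁) and Γ_{H₂}(G₂) are isospectral: the characteristic polynomials of their adjacency matrices are equal. -/

import Mathlib

open Finset Polynomial Module
open scoped Classical

noncomputable section

/-- The connection set `S_H = {(g,1), (1,g), (g,g) : g ∈ G \ H}`. -/
def SH (G : Type*) [Group G] (H : Subgroup G) : Set (G × G) :=
  {p | (∃ g ∉ H, p = (g, 1)) ∨ (∃ g ∉ H, p = (1, g)) ∨ (∃ g ∉ H, p = (g, g))}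

lemma SH_inv {G : Type*} [Group G] (H : Subgroup G) {p : G × G} (hp : p ∈ SH G H) :
    p⁻¹ ∈ SH G H := by
  rcases hp with ⟨g, hg, rfl⟩ | ⟨g, hg, rfl⟩ | ⟨g, hg, rfl⟩
  · exact Or.inl ⟨g⁻¹, fun h => hg (by simpa using H.inv_mem h), by simp [Prod.ext_iff]⟩
  · exact Or.inr (Or.inl ⟨g⁻¹, fun h => hg (by simpa using H.inv_mem h), by simp [Prod.ext_iff]⟩)
  · exact Or.inr (Or.inr ⟨g⁻¹, fun h => hg (by simpa using H.inv_mem h), by simp [Prod.ext_iff]⟩)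

/-- The Cayley graph `Γ_H(G) = Cay(G × G, S_H)`:
distinct `u, v` are adjacent iff `u * v⁻¹ ∈ S_H`. -/
def Gamma (G : Type*) [Group G] (H : Subgroup G) : SimpleGraph (G × G) where
  Adj u v := u ≠ v ∧ u * v⁻¹ ∈ SH G H
  symm := by
    refine ⟨?_⟩
    rintro u v ⟨hne, hS⟩
    refine ⟨hne.symm, ?_⟩
    have h : v * u⁻¹ = (u * v⁻¹)⁻¹ := by simp [mul_inv_rev]
    rw [h]
    exact SH_inv H hS
  loopless := ⟨fun u h => h.1 rfl⟩

namespace Iso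

/-- Universal coefficient recursion: `pq n h m = (p_{m+1}, q_{m+1})`. -/
def pq (n h : ℂ) : ℕ → ℂ × ℂ
  | 0 => (1, -1)
  | m + 1 => ((n - h) * (pq n h m).1 + h * (pq n h m).2, -h * (pq n h m).2)

def v1 (n h : ℂ) : ℕ → ℂ
  | 0 => 1
  | m + 1 => (pq n h m).1 + (pq n h m).2

def vHv (n h : ℂ) : ℕ → ℂ
  | 0 => 0
  | m + 1 => (pq n h m).1 + (pq n h m).2

def vGv (n h : ℂ) : ℕ → ℂ
  | 0 => 0
  | m + 1 => (pq n h m).1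

def Phi (n h : ℂ) (i j l : ℕ) : ℂ :=
  v1 n h i * v1 n h j * v1 n h l + (h - 1) * (vHv n h i * vHv n h j * vHv n h l)
    + (n - h) * (vGv n h i * vGv n h j * vGv n h l)

def TrF (n h : ℂ) (k : ℕ) : ℂ :=
  ∑ m ∈ Finset.range (k + 1), ∑ j ∈ Finset.range (k - m + 1),
    ((k - m).choose j : ℂ) * ((k.choose m : ℂ) * (n ^ 2 * Phi n h m j (k - m - j)))

variable {G : Type*} [Group G] [Fintype G] (H : Subgroup G)

/-- indicator of the complement of `H` -/
def cbf : G → ℂ := fun g => if g ∈ H then 0 else 1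

/-- indicator of `H` -/
def indH : G → ℂ := fun g => if g ∈ H then 1 else 0

/-- `chat m` : coefficient function of the `m`-th convolution power -/
def chat (n h : ℂ) : ℕ → G → ℂ
  | 0 => fun g => if g = 1 then 1 else 0
  | m + 1 => fun g => (pq n h m).1 + (pq n h m).2 * indH H g

local notation "nn" => (Fintype.card G : ℂ)
local notation "hh" => (Nat.card H : ℂ)

lemma sum_indH : ∑ t : G, indH H t = hh := by
  unfold indH
  rw [Finset.sum_boole]
  congr 1
  rw [Nat.card_eq_fintype_card]
  exact (Fintype.card_subtype _).symm

lemma sum_shift_inv (f : G → ℂ) (x : G) : ∑ t : G, f (x * t⁻¹) = ∑ t : G, f t := by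
  apply Fintype.sum_equiv ((Equiv.inv G).trans (Equiv.mulLeft x))
  intro t
  simp [Equiv.mulLeft]

lemma indH_mul_indH (x t : G) : indH H (x * t⁻¹) * indH H t = indH H x * indH H t := by
  unfold indH
  by_cases ht : t ∈ H
  · have : x * t⁻¹ ∈ H ↔ x ∈ H := by
      constructor
      · intro h; simpa using H.mul_mem h (H.inv_mem (H.inv_mem ht))
      · intro h; exact H.mul_mem h (H.inv_mem ht)
    simp [ht, this]
  · simp [ht]

lemma cbf_eq (g : G) : cbf H g = 1 - indH H g := by
  unfold cbf indH; split <;> ring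

lemma conv_chat (m : ℕ) (x : G) :
    ∑ t : G, chat H nn hh m (x * t⁻¹) * cbf H t = chat H nn hh (m + 1) x := by
  cases m with
  | zero =>
    rw [Finset.sum_eq_single_of_mem x (Finset.mem_univ x)]
    · simp [chat, pq, cbf_eq]
      ring
    · intro t _ ht
      have : ¬(x * t⁻¹ = 1) := by
        intro h; exact ht (by rwa [mul_inv_eq_one, eq_comm] at h)
      simp [chat, this]
  | succ m =>
    have point : ∀ t : G, chat H nn hh (m + 1) (x * t⁻¹) * cbf H t
        = ((pq nn hh m).1 + (pq nn hh m).2 * indH H (x * t⁻¹))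
          - ((pq nn hh m).1 * indH H t + (pq nn hh m).2 * (indH H x * indH H t)) := by
      intro t
      rw [chat, cbf_eq, ← indH_mul_indH H x t]
      ring
    rw [Finset.sum_congr rfl fun t _ => point t]
    simp only [Finset.sum_sub_distrib, Finset.sum_add_distrib, ← Finset.mul_sum,
      sum_shift_inv (indH H) x, sum_indH, Finset.sum_const, Finset.card_univ, nsmul_eq_mul]
    simp only [chat, pq]
    ring


lemma chat_inv (m : ℕ) (g : G) : chat H nn hh m g⁻¹ = chat H nn hh m g := by
  cases m with
  | zero => simp [chat, inv_eq_one]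
  | succ m => simp [chat, indH, inv_mem_iff]

lemma chat_cases (m : ℕ) (g : G) : chat H nn hh m g =
    if g = 1 then v1 nn hh m else if g ∈ H then vHv nn hh m else vGv nn hh m := by
  cases m with
  | zero =>
    by_cases h1 : g = 1
    · simp [chat, h1, v1]
    · simp [chat, h1, vHv, vGv]
  | succ m =>
    by_cases h1 : g = 1
    · subst h1
      simp [chat, indH, H.one_mem, v1]
    · by_cases h2 : g ∈ H <;> simp [chat, indH, h1, h2, vHv, vGv]

lemma conv_pin (i : ℕ) (x y : G) :
    ∑ t : G, chat H nn hh i (x * t⁻¹) * cbf H (t * y⁻¹) = chat H nn hh (i + 1) (x * y⁻¹) := by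
  rw [← conv_chat H i (x * y⁻¹)]
  apply Fintype.sum_equiv (Equiv.mulRight y⁻¹)
  intro t
  have h1 : (x * y⁻¹) * (t * y⁻¹)⁻¹ = x * t⁻¹ := by group
  simp only [Equiv.coe_mulRight, h1]

lemma cross {a b w1 w2 : G} : a * w1⁻¹ = b * w2⁻¹ ↔ w2 = w1 * a⁻¹ * b := by
  constructor
  · intro h
    have h2 : a * w1⁻¹ * w2 = b := by rw [h]; group
    rw [← h2]; group
  · intro h; subst h; group

lemma cross' {a b c d : G} : a * b⁻¹ = c * d⁻¹ ↔ c = a * b⁻¹ * d := by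
  constructor
  · intro h; rw [h]; group
  · intro h; rw [h]; group

def X1 : Matrix (G × G) (G × G) ℂ :=
  Matrix.of fun u v => cbf H (u.1 * v.1⁻¹) * (if u.2 = v.2 then 1 else 0)

def X2 : Matrix (G × G) (G × G) ℂ :=
  Matrix.of fun u v => (if u.1 = v.1 then 1 else 0) * cbf H (u.2 * v.2⁻¹)

def X3 : Matrix (G × G) (G × G) ℂ :=
  Matrix.of fun u v => if u.1 * v.1⁻¹ = u.2 * v.2⁻¹ then cbf H (u.1 * v.1⁻¹) else 0

lemma X1_pow (i : ℕ) : X1 H ^ i =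
    Matrix.of fun u v : G × G => chat H nn hh i (u.1 * v.1⁻¹) * (if u.2 = v.2 then 1 else 0) := by
  induction i with
  | zero =>
    ext u v
    simp only [pow_zero, Matrix.one_apply, Matrix.of_apply, chat]
    by_cases h1 : u.1 = v.1 <;> by_cases h2 : u.2 = v.2 <;>
      simp [Prod.ext_iff, h1, h2, mul_inv_eq_one]
  | succ i ih =>
    rw [pow_succ, ih]
    ext u v
    rw [Matrix.mul_apply, Fintype.sum_prod_type]
    simp only [Matrix.of_apply, X1]
    have inner : ∀ w1 : G, (∑ w2 : G,
        (chat H nn hh i (u.1 * w1⁻¹) * if u.2 = w2 then 1 else 0) *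
          (cbf H (w1 * v.1⁻¹) * if w2 = v.2 then 1 else 0))
        = (chat H nn hh i (u.1 * w1⁻¹) * cbf H (w1 * v.1⁻¹)) * (if u.2 = v.2 then 1 else 0) := by
      intro w1
      rw [Finset.sum_eq_single_of_mem u.2 (Finset.mem_univ _)]
      · by_cases h : u.2 = v.2 <;> simp [h] <;> ring
      · intro b _ hb
        rw [if_neg (fun h => hb h.symm)]
        ring
    rw [Finset.sum_congr rfl fun w1 _ => inner w1, ← Finset.sum_mul, conv_pin]

lemma X2_pow (j : ℕ) : X2 H ^ j =
    Matrix.of fun u v : G × G => (if u.1 = v.1 then 1 else 0) * chat H nn hh j (u.2 * v.2⁻¹) := by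
  induction j with
  | zero =>
    ext u v
    simp only [pow_zero, Matrix.one_apply, Matrix.of_apply, chat]
    by_cases h1 : u.1 = v.1 <;> by_cases h2 : u.2 = v.2 <;>
      simp [Prod.ext_iff, h1, h2, mul_inv_eq_one]
  | succ j ih =>
    rw [pow_succ, ih]
    ext u v
    rw [Matrix.mul_apply, Fintype.sum_prod_type]
    simp only [Matrix.of_apply, X2]
    rw [Finset.sum_eq_single_of_mem u.1 (Finset.mem_univ _)]
    · have inner : ∀ w2 : G,
          ((if u.1 = u.1 then (1:ℂ) else 0) * chat H nn hh j (u.2 * w2⁻¹)) *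
            ((if u.1 = v.1 then 1 else 0) * cbf H (w2 * v.2⁻¹))
          = (if u.1 = v.1 then 1 else 0) * (chat H nn hh j (u.2 * w2⁻¹) * cbf H (w2 * v.2⁻¹)) := by
        intro w2; rw [if_pos rfl]; ring
      rw [Finset.sum_congr rfl fun w2 _ => inner w2, ← Finset.mul_sum, conv_pin]
    · intro b _ hb
      apply Finset.sum_eq_zero
      intro w2 _
      rw [if_neg (fun h => hb h.symm)]
      ring

lemma X3_pow (l : ℕ) : X3 H ^ l =
    Matrix.of fun u v : G × G =>
      if u.1 * v.1⁻¹ = u.2 * v.2⁻¹ then chat H nn hh l (u.1 * v.1⁻¹) else 0 := by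
  induction l with
  | zero =>
    ext u v
    simp only [pow_zero, Matrix.one_apply, Matrix.of_apply, chat]
    by_cases h1 : u.1 = v.1 <;> by_cases h2 : u.2 = v.2 <;>
      simp [Prod.ext_iff, h1, h2, mul_inv_eq_one, eq_comm]
  | succ l ih =>
    rw [pow_succ, ih]
    ext u v
    rw [Matrix.mul_apply, Fintype.sum_prod_type]
    simp only [Matrix.of_apply, X3]
    have inner : ∀ w1 : G, (∑ w2 : G,
        (if u.1 * w1⁻¹ = u.2 * w2⁻¹ then chat H nn hh l (u.1 * w1⁻¹) else 0) *
          (if w1 * v.1⁻¹ = w2 * v.2⁻¹ then cbf H (w1 * v.1⁻¹) else 0))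
        = if u.1 * v.1⁻¹ = u.2 * v.2⁻¹ then
            chat H nn hh l (u.1 * w1⁻¹) * cbf H (w1 * v.1⁻¹) else 0 := by
      intro w1
      rw [Finset.sum_eq_single_of_mem (w1 * u.1⁻¹ * u.2) (Finset.mem_univ _)]
      · rw [if_pos (cross.mpr rfl)]
        have hc : (w1 * v.1⁻¹ = (w1 * u.1⁻¹ * u.2) * v.2⁻¹) ↔ (u.1 * v.1⁻¹ = u.2 * v.2⁻¹) := by
          rw [cross, cross]
          constructor
          · intro h; rw [h]; group
          · intro h; rw [h]; group
        by_cases hcond : u.1 * v.1⁻¹ = u.2 * v.2⁻¹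
        · rw [if_pos (hc.mpr hcond), if_pos hcond]
        · rw [if_neg (fun h => hcond (hc.mp h)), if_neg hcond]; ring
      · intro b _ hb
        rw [if_neg (fun h => hb (cross.mp h))]
        ring
    rw [Finset.sum_congr rfl fun w1 _ => inner w1]
    by_cases hcond : u.1 * v.1⁻¹ = u.2 * v.2⁻¹
    · simp only [if_pos hcond, conv_pin]
    · simp only [if_neg hcond, Finset.sum_const_zero]

lemma mul_X1_X2 (i j : ℕ) : X1 H ^ i * X2 H ^ j =
    Matrix.of fun u v : G × G => chat H nn hh i (u.1 * v.1⁻¹) * chat H nn hh j (u.2 * v.2⁻¹) := by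
  rw [X1_pow, X2_pow]
  ext u v
  rw [Matrix.mul_apply, Fintype.sum_prod_type]
  simp only [Matrix.of_apply]
  rw [Finset.sum_eq_single_of_mem v.1 (Finset.mem_univ _)]
  · rw [Finset.sum_eq_single_of_mem u.2 (Finset.mem_univ _)]
    · rw [if_pos rfl, if_pos rfl]; ring
    · intro b _ hb
      rw [if_neg (fun h => hb h.symm)]
      ring
  · intro b _ hb
    apply Finset.sum_eq_zero
    intro w2 _
    rw [if_neg hb]
    ring


lemma cbf_comm [H.Normal] (x y : G) : cbf H (x * y) = cbf H (y * x) := by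
  unfold cbf
  by_cases hxy : x * y ∈ H
  · rw [if_pos hxy, if_pos (Subgroup.Normal.mem_comm ‹H.Normal› hxy)]
  · rw [if_neg hxy, if_neg (fun h => hxy (Subgroup.Normal.mem_comm ‹H.Normal› h))]

lemma comm12 : X1 H * X2 H = X2 H * X1 H := by
  ext u v
  rw [Matrix.mul_apply, Matrix.mul_apply]
  simp only [X1, X2, Matrix.of_apply]
  rw [Finset.sum_eq_single_of_mem ((v.1, u.2) : G × G) (Finset.mem_univ _)]
  · rw [Finset.sum_eq_single_of_mem ((u.1, v.2) : G × G) (Finset.mem_univ _)]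
    · simp only [if_pos rfl]
      ring
    · intro b _ hb
      by_cases hb1 : u.1 = b.1
      · have hb2 : ¬(b.2 = v.2) := fun h => hb (Prod.ext_iff.mpr ⟨hb1.symm, h⟩)
        rw [if_neg hb2]
        ring
      · rw [if_neg hb1]
        ring
  · intro b _ hb
    by_cases hb1 : b.1 = v.1
    · have hb2 : ¬(u.2 = b.2) := fun h => hb (Prod.ext_iff.mpr ⟨hb1, h.symm⟩)
      rw [if_neg hb2]
      ring
    · rw [if_neg hb1]
      ring

lemma comm13 [H.Normal] : X1 H * X3 H = X3 H * X1 H := by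
  ext u v
  rw [Matrix.mul_apply, Matrix.mul_apply]
  simp only [X1, X3, Matrix.of_apply]
  rw [Finset.sum_eq_single_of_mem ((u.2 * v.2⁻¹ * v.1, u.2) : G × G) (Finset.mem_univ _)]
  · rw [Finset.sum_eq_single_of_mem ((v.2 * u.2⁻¹ * u.1, v.2) : G × G) (Finset.mem_univ _)]
    · have hc1 : (u.2 * v.2⁻¹ * v.1) * v.1⁻¹ = u.2 * v.2⁻¹ := by group
      have hc2 : u.1 * (v.2 * u.2⁻¹ * u.1)⁻¹ = u.2 * v.2⁻¹ := by group
      rw [if_pos hc1, if_pos hc2, hc1, hc2]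
      have ha1 : u.1 * (u.2 * v.2⁻¹ * v.1)⁻¹ = (u.1 * v.1⁻¹) * (v.2 * u.2⁻¹) := by group
      have ha2 : (v.2 * u.2⁻¹ * u.1) * v.1⁻¹ = (v.2 * u.2⁻¹) * (u.1 * v.1⁻¹) := by group
      rw [ha1, ha2, cbf_comm H (u.1 * v.1⁻¹) (v.2 * u.2⁻¹)]
      simp only [if_pos rfl]
      ring
    · intro b _ hb
      by_cases hb2 : b.2 = v.2
      · have : ¬(u.1 * b.1⁻¹ = u.2 * b.2⁻¹) := by
          intro h
          rw [hb2] at h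
          exact hb (Prod.ext_iff.mpr ⟨cross.mp h.symm, hb2⟩)
        rw [if_neg this]
        ring
      · rw [if_neg hb2]
        ring
  · intro b _ hb
    by_cases hb2 : u.2 = b.2
    · have : ¬(b.1 * v.1⁻¹ = b.2 * v.2⁻¹) := by
        intro h
        rw [← hb2] at h
        exact hb (Prod.ext_iff.mpr ⟨cross'.mp h.symm, hb2.symm⟩)
      rw [if_neg this]
      ring
    · rw [if_neg hb2]
      ring

lemma comm23 [H.Normal] : X2 H * X3 H = X3 H * X2 H := by
  ext u v
  rw [Matrix.mul_apply, Matrix.mul_apply]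
  simp only [X2, X3, Matrix.of_apply]
  rw [Finset.sum_eq_single_of_mem ((u.1, u.1 * v.1⁻¹ * v.2) : G × G) (Finset.mem_univ _)]
  · rw [Finset.sum_eq_single_of_mem ((v.1, v.1 * u.1⁻¹ * u.2) : G × G) (Finset.mem_univ _)]
    · have hc1 : u.1 * v.1⁻¹ = (u.1 * v.1⁻¹ * v.2) * v.2⁻¹ := by group
      have hc2 : u.1 * v.1⁻¹ = u.2 * (v.1 * u.1⁻¹ * u.2)⁻¹ := by group
      rw [if_pos hc1, if_pos hc2]
      have ha1 : u.2 * (u.1 * v.1⁻¹ * v.2)⁻¹ = (u.2 * v.2⁻¹) * (v.1 * u.1⁻¹) := by group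
      have ha2 : (v.1 * u.1⁻¹ * u.2) * v.2⁻¹ = (v.1 * u.1⁻¹) * (u.2 * v.2⁻¹) := by group
      rw [ha1, ha2, cbf_comm H (u.2 * v.2⁻¹) (v.1 * u.1⁻¹)]
      simp only [if_pos rfl]
      ring
    · intro b _ hb
      by_cases hb1 : b.1 = v.1
      · have : ¬(u.1 * b.1⁻¹ = u.2 * b.2⁻¹) := by
          intro h
          have h2 : b.2 = b.1 * u.1⁻¹ * u.2 := cross.mp h
          exact hb (Prod.ext_iff.mpr ⟨hb1, by rw [h2, hb1]⟩)
        rw [if_neg this]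
        ring
      · rw [if_neg hb1]
        ring
  · intro b _ hb
    by_cases hb1 : u.1 = b.1
    · have : ¬(b.1 * v.1⁻¹ = b.2 * v.2⁻¹) := by
        intro h
        have h2 : b.2 = b.1 * v.1⁻¹ * v.2 := cross'.mp h
        exact hb (Prod.ext_iff.mpr ⟨hb1.symm, by rw [h2, ← hb1]⟩)
      rw [if_neg this]
      ring
    · rw [if_neg hb1]
      ring

lemma mem_SH_iff (u v : G × G) : u * v⁻¹ ∈ SH G H ↔
    ((u.2 = v.2 ∧ u.1 * v.1⁻¹ ∉ H) ∨ (u.1 = v.1 ∧ u.2 * v.2⁻¹ ∉ H) ∨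
      (u.1 * v.1⁻¹ = u.2 * v.2⁻¹ ∧ u.1 * v.1⁻¹ ∉ H)) := by
  constructor
  · rintro (⟨g, hg, hp⟩ | ⟨g, hg, hp⟩ | ⟨g, hg, hp⟩) <;>
      (rw [Prod.ext_iff] at hp;
       simp only [Prod.fst_mul, Prod.snd_mul, Prod.fst_inv, Prod.snd_inv] at hp)
    · exact Or.inl ⟨mul_inv_eq_one.mp hp.2, by rw [hp.1]; exact hg⟩
    · exact Or.inr (Or.inl ⟨mul_inv_eq_one.mp hp.1, by rw [hp.2]; exact hg⟩)
    · exact Or.inr (Or.inr ⟨by rw [hp.1, hp.2], by rw [hp.1]; exact hg⟩)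
  · rintro (⟨h1, h2⟩ | ⟨h1, h2⟩ | ⟨h1, h2⟩)
    · exact Or.inl ⟨u.1 * v.1⁻¹, h2, Prod.ext_iff.mpr ⟨rfl, mul_inv_eq_one.mpr h1⟩⟩
    · exact Or.inr (Or.inl ⟨u.2 * v.2⁻¹, h2, Prod.ext_iff.mpr ⟨mul_inv_eq_one.mpr h1, rfl⟩⟩)
    · exact Or.inr (Or.inr ⟨u.1 * v.1⁻¹, h2, Prod.ext_iff.mpr ⟨rfl, h1.symm⟩⟩)

lemma adj_eq : (Gamma G H).adjMatrix ℂ = X1 H + X2 H + X3 H := by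
  ext u v
  simp only [SimpleGraph.adjMatrix_apply, Matrix.add_apply, Matrix.of_apply, X1, X2, X3]
  have hAdj : (Gamma G H).Adj = fun u v => u ≠ v ∧ u * v⁻¹ ∈ SH G H := rfl
  rw [hAdj]
  by_cases h1 : u.1 = v.1 <;> by_cases h2 : u.2 = v.2
  · have huv : u = v := Prod.ext_iff.mpr ⟨h1, h2⟩
    have e1 : u.1 * v.1⁻¹ = 1 := mul_inv_eq_one.mpr h1
    have e2 : u.2 * v.2⁻¹ = 1 := mul_inv_eq_one.mpr h2
    simp [huv, cbf, e1, e2, H.one_mem]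
  · have hne : u ≠ v := fun h => h2 (congrArg Prod.snd h)
    have e1 : u.1 * v.1⁻¹ = 1 := mul_inv_eq_one.mpr h1
    have e2 : ¬(u.2 * v.2⁻¹ = 1) := fun h => h2 (mul_inv_eq_one.mp h)
    have e3 : ¬((1:G) = u.2 * v.2⁻¹) := fun h => e2 h.symm
    by_cases hH : u.2 * v.2⁻¹ ∈ H <;>
      simp [hne, h1, h2, e1, e3, H.one_mem, cbf, hH, mem_SH_iff]
  · have hne : u ≠ v := fun h => h1 (congrArg Prod.fst h)
    have e2 : u.2 * v.2⁻¹ = 1 := mul_inv_eq_one.mpr h2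
    have e1 : ¬(u.1 * v.1⁻¹ = 1) := fun h => h1 (mul_inv_eq_one.mp h)
    by_cases hH : u.1 * v.1⁻¹ ∈ H <;>
      simp [hne, h1, h2, e1, e2, H.one_mem, cbf, hH, mem_SH_iff]
  · have hne : u ≠ v := fun h => h1 (congrArg Prod.fst h)
    by_cases h5 : u.1 * v.1⁻¹ = u.2 * v.2⁻¹ <;> by_cases h6 : u.1 * v.1⁻¹ ∈ H <;>
      simp [hne, h1, h2, h5, h6, cbf, mem_SH_iff]

lemma sum_chat_triple (i j l : ℕ) :
    ∑ t : G, chat H nn hh i t * chat H nn hh j t * chat H nn hh l t = Phi nn hh i j l := by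
  set V1 := v1 nn hh i * v1 nn hh j * v1 nn hh l with hV1
  set VH := vHv nn hh i * vHv nn hh j * vHv nn hh l with hVH
  set VG := vGv nn hh i * vGv nn hh j * vGv nn hh l with hVG
  have point : ∀ t : G, chat H nn hh i t * chat H nn hh j t * chat H nn hh l t
      = (if t = 1 then V1 - VH else 0) + (indH H t * (VH - VG) + VG) := by
    intro t
    rw [chat_cases, chat_cases, chat_cases]
    unfold indH
    by_cases ht1 : t = 1
    · have htH : t ∈ H := ht1 ▸ H.one_mem
      simp only [if_pos ht1, if_pos htH]
      ring
    · simp only [if_neg ht1]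
      by_cases htH : t ∈ H
      · simp only [if_pos htH]; ring
      · simp only [if_neg htH]; ring
  rw [Finset.sum_congr rfl fun t _ => point t]
  rw [Finset.sum_add_distrib, Finset.sum_add_distrib, ← Finset.sum_mul, sum_indH,
    Finset.sum_const, Finset.card_univ, Finset.sum_ite_eq' Finset.univ (1 : G)]
  simp only [Finset.mem_univ, if_pos, nsmul_eq_mul, Phi]
  ring

lemma trace_triple [H.Normal] (i j l : ℕ) :
    (X1 H ^ i * X2 H ^ j * X3 H ^ l).trace = nn ^ 2 * Phi nn hh i j l := by
  rw [mul_X1_X2, X3_pow, Matrix.trace]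
  have diag : ∀ u : G × G,
      ((Matrix.of fun u v : G × G => chat H nn hh i (u.1 * v.1⁻¹) * chat H nn hh j (u.2 * v.2⁻¹)) *
        (Matrix.of fun u v : G × G =>
          if u.1 * v.1⁻¹ = u.2 * v.2⁻¹ then chat H nn hh l (u.1 * v.1⁻¹) else 0)).diag u
      = ∑ t : G, chat H nn hh i t * chat H nn hh j t * chat H nn hh l t := by
    intro u
    rw [Matrix.diag_apply, Matrix.mul_apply, Fintype.sum_prod_type]
    simp only [Matrix.of_apply]
    have inner : ∀ w1 : G, (∑ w2 : G,
        (chat H nn hh i (u.1 * w1⁻¹) * chat H nn hh j (u.2 * w2⁻¹)) *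
          (if w1 * u.1⁻¹ = w2 * u.2⁻¹ then chat H nn hh l (w1 * u.1⁻¹) else 0))
        = chat H nn hh i (u.1 * w1⁻¹) * chat H nn hh j (u.1 * w1⁻¹) *
            chat H nn hh l (u.1 * w1⁻¹) := by
      intro w1
      rw [Finset.sum_eq_single_of_mem (w1 * u.1⁻¹ * u.2) (Finset.mem_univ _)]
      · have hc : w1 * u.1⁻¹ = (w1 * u.1⁻¹ * u.2) * u.2⁻¹ := by group
        rw [if_pos hc]
        have ha : u.2 * (w1 * u.1⁻¹ * u.2)⁻¹ = u.1 * w1⁻¹ := by group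
        have hb : w1 * u.1⁻¹ = (u.1 * w1⁻¹)⁻¹ := by group
        rw [ha, hb, chat_inv]
      · intro b _ hb
        rw [if_neg (fun h => hb (cross'.mp h))]
        ring
    rw [Finset.sum_congr rfl fun w1 _ => inner w1]
    exact sum_shift_inv (fun t => chat H nn hh i t * chat H nn hh j t * chat H nn hh l t) u.1
  rw [Finset.sum_congr rfl fun u _ => diag u, Finset.sum_const, Finset.card_univ,
    Fintype.card_prod, sum_chat_triple, nsmul_eq_mul]
  push_cast
  ring


theorem trace_pow [H.Normal] (k : ℕ) :
    (((Gamma G H).adjMatrix ℂ) ^ k).trace = TrF nn hh k := by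
  have hC1 : Commute (X1 H) (X2 H + X3 H) := Commute.add_right (comm12 H) (comm13 H)
  have hC2 : Commute (X2 H) (X3 H) := comm23 H
  have castlemma : ∀ (M : Matrix (G × G) (G × G) ℂ) (c : ℕ),
      (M * (c : Matrix (G × G) (G × G) ℂ)).trace = (c : ℂ) * M.trace := by
    intro M c
    have h1 : (c : Matrix (G × G) (G × G) ℂ) = c • (1 : Matrix (G × G) (G × G) ℂ) := by
      rw [nsmul_eq_mul, mul_one]
    rw [h1, mul_smul_comm, mul_one, Matrix.trace_smul, nsmul_eq_mul]
  rw [adj_eq, add_assoc, Commute.add_pow hC1, Matrix.trace_sum]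
  unfold TrF
  refine Finset.sum_congr rfl fun m hm => ?_
  rw [Commute.add_pow hC2, Finset.mul_sum, Finset.sum_mul, Matrix.trace_sum]
  refine Finset.sum_congr rfl fun j hj => ?_
  calc (X1 H ^ m * (X2 H ^ j * X3 H ^ (k - m - j) *
          (((k - m).choose j : ℕ) : Matrix (G × G) (G × G) ℂ)) *
        ((k.choose m : ℕ) : Matrix (G × G) (G × G) ℂ)).trace
      = ((X1 H ^ m * X2 H ^ j * X3 H ^ (k - m - j)) *
          ((((k - m).choose j * k.choose m : ℕ)) : Matrix (G × G) (G × G) ℂ)).trace := by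
        rw [Nat.cast_mul]
        noncomm_ring
    _ = (((k - m).choose j * k.choose m : ℕ) : ℂ) *
          (X1 H ^ m * X2 H ^ j * X3 H ^ (k - m - j)).trace := castlemma _ _
    _ = ((k - m).choose j : ℂ) * ((k.choose m : ℂ) * (nn ^ 2 * Phi nn hh m j (k - m - j))) := by
        rw [trace_triple]
        push_cast
        ring

lemma adj_isHermitian : ((Gamma G H).adjMatrix ℂ).IsHermitian := by
  have : ∀ u v : G × G, (Gamma G H).Adj u v ↔ (Gamma G H).Adj v u := fun u v =>
    SimpleGraph.adj_comm _ u v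
  ext u v
  rw [Matrix.conjTranspose_apply, SimpleGraph.adjMatrix_apply, SimpleGraph.adjMatrix_apply,
    this u v]
  split <;> simp

lemma trace_reindex {m n' : Type*} [Fintype m] [Fintype n'] [DecidableEq m] [DecidableEq n']
    (e : m ≃ n') (M : Matrix m m ℂ) : (Matrix.reindex e e M).trace = M.trace := by
  rw [Matrix.trace, Matrix.trace]
  apply Fintype.sum_equiv e.symm
  intro x
  simp [Matrix.reindex_apply, Matrix.submatrix_apply]

lemma pow_reindex {m n' : Type*} [Fintype m] [Fintype n'] [DecidableEq m] [DecidableEq n']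
    (e : m ≃ n') (M : Matrix m m ℂ) (k : ℕ) :
    (Matrix.reindex e e M) ^ k = Matrix.reindex e e (M ^ k) := by
  induction k with
  | zero =>
    simp only [pow_zero, Matrix.reindex_apply]
    ext u v
    by_cases h : u = v <;> simp [Matrix.one_apply, Matrix.submatrix_apply, h]
  | succ k ih =>
    rw [pow_succ, ih, pow_succ, Matrix.reindex_apply, Matrix.reindex_apply,
      Matrix.reindex_apply, Matrix.submatrix_mul_equiv]



lemma aeval_psum {N : ℕ} (v : Fin N → ℂ) (k : ℕ) :
    MvPolynomial.aeval v (MvPolynomial.psum (Fin N) ℂ k) = ∑ i, v i ^ k := by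
  simp [MvPolynomial.psum]

lemma esymm_eq_of_psum_eq {N : ℕ} (v w : Fin N → ℂ)
    (hp : ∀ k, 0 < k → ∑ i, v i ^ k = ∑ i, w i ^ k) (k : ℕ) :
    (Multiset.map v Finset.univ.val).esymm k = (Multiset.map w Finset.univ.val).esymm k := by
  induction k using Nat.strong_induction_on with
  | _ k ih =>
  rcases Nat.eq_zero_or_pos k with rfl | hk
  · simp [Multiset.esymm]
  have hv := congrArg (MvPolynomial.aeval v) (MvPolynomial.mul_esymm_eq_sum (Fin N) ℂ k)
  have hw := congrArg (MvPolynomial.aeval w) (MvPolynomial.mul_esymm_eq_sum (Fin N) ℂ k)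
  simp only [map_mul, map_sum, map_pow, map_natCast, map_neg, map_one,
    MvPolynomial.aeval_esymm_eq_multiset_esymm, aeval_psum] at hv hw
  have hrhs : ∑ a ∈ Finset.HasAntidiagonal.antidiagonal k with a.1 < k,
        (-1:ℂ) ^ a.1 * (Multiset.map v Finset.univ.val).esymm a.1 * ∑ i, v i ^ a.2
      = ∑ a ∈ Finset.HasAntidiagonal.antidiagonal k with a.1 < k,
        (-1:ℂ) ^ a.1 * (Multiset.map w Finset.univ.val).esymm a.1 * ∑ i, w i ^ a.2 := by
    refine Finset.sum_congr rfl ?_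
    rintro ⟨a, b⟩ hab
    simp only [Finset.mem_filter, Finset.HasAntidiagonal.mem_antidiagonal] at hab
    have hb : 0 < b := by omega
    rw [ih a hab.2, hp b hb]
  have : (k : ℂ) * (Multiset.map v Finset.univ.val).esymm k
      = (k : ℂ) * (Multiset.map w Finset.univ.val).esymm k := by
    rw [hv, hw, hrhs]
  exact mul_left_cancel₀ (by exact_mod_cast hk.ne') this

lemma charpoly_diagonal {m : Type*} [Fintype m] [DecidableEq m] (d : m → ℂ) :
    (Matrix.diagonal d).charpoly = ∏ i, (X - C (d i)) := by
  rw [Matrix.charpoly]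
  have : (Matrix.diagonal d).charmatrix = Matrix.diagonal (fun i => X - C (d i)) := by
    ext i j
    by_cases h : i = j
    · subst h; simp [Matrix.charmatrix_apply_eq]
    · simp [Matrix.charmatrix_apply_ne _ _ _ h, Matrix.diagonal_apply_ne _ h,
        Matrix.diagonal_apply_ne' _ h]
  rw [this, Matrix.det_diagonal]

lemma charpoly_conj {m : Type*} [Fintype m] [DecidableEq m]
    (U D V : Matrix m m ℂ) (hUV : U * V = 1) (hVU : V * U = 1) :
    (U * D * V).charpoly = D.charpoly := by
  have hmap : ∀ (A B : Matrix m m ℂ),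
      (A * B).map (C : ℂ →+* ℂ[X]) = A.map C * B.map C := fun A B => by
    ext i j; simp [Matrix.map_apply, Matrix.mul_apply]
  have h1 : U.map (C : ℂ →+* ℂ[X]) * V.map C = 1 := by
    rw [← hmap, hUV]; ext i j; simp only [Matrix.map_apply, Matrix.one_apply]; split <;> simp
  have hscal : Matrix.scalar m (X : ℂ[X]) = (X : ℂ[X]) • (1 : Matrix m m ℂ[X]) := by
    ext i j; simp only [Matrix.scalar_apply, Matrix.smul_apply, Matrix.one_apply,
      Matrix.diagonal_apply]; split <;> simp
  have key : (U * D * V).charmatrix = U.map C * D.charmatrix * V.map C := by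
    unfold Matrix.charmatrix
    simp only [RingHom.mapMatrix_apply]
    rw [Matrix.mul_sub, Matrix.sub_mul]
    congr 1
    · rw [hscal, mul_smul_comm, smul_mul_assoc, Matrix.mul_one, h1]
    · rw [hmap, hmap]
  rw [Matrix.charpoly, Matrix.charpoly, key, Matrix.det_mul, Matrix.det_mul]
  calc (U.map (C : ℂ →+* ℂ[X])).det * D.charmatrix.det * (V.map C).det
      = D.charmatrix.det * ((U.map (C : ℂ →+* ℂ[X])).det * (V.map C).det) := by ring
    _ = D.charmatrix.det := by rw [← Matrix.det_mul, h1, Matrix.det_one, mul_one]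

lemma conj_pow {m : Type*} [Fintype m] [DecidableEq m]
    (U D V : Matrix m m ℂ) (hUV : U * V = 1) (hVU : V * U = 1) (k : ℕ) :
    (U * D * V) ^ k = U * D ^ k * V := by
  induction k with
  | zero => simp [hUV]
  | succ k ih =>
    rw [pow_succ, ih, pow_succ]
    calc U * D ^ k * V * (U * D * V) = U * D ^ k * (V * U) * D * V := by
          simp only [Matrix.mul_assoc]
      _ = U * (D ^ k * D) * V := by rw [hVU]; simp only [Matrix.mul_mul_apply, Matrix.mul_one]; noncomm_ring

lemma charpoly_eq_of_trace_pow {N : ℕ} (A B : Matrix (Fin N) (Fin N) ℂ)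
    (hA : A.IsHermitian) (hB : B.IsHermitian)
    (htr : ∀ k, 0 < k → (A ^ k).trace = (B ^ k).trace) :
    A.charpoly = B.charpoly := by
  set v : Fin N → ℂ := fun i => ((hA.eigenvalues i : ℝ) : ℂ) with hv
  set w : Fin N → ℂ := fun i => ((hB.eigenvalues i : ℝ) : ℂ) with hw
  -- unitary facts
  obtain ⟨U, hU⟩ : ∃ U : Matrix (Fin N) (Fin N) ℂ,
      U * star U = 1 ∧ star U * U = 1 ∧ A = U * Matrix.diagonal v * star U := by
    refine ⟨(hA.eigenvectorUnitary : Matrix (Fin N) (Fin N) ℂ), ?_, ?_, ?_⟩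
    · exact (Matrix.mem_unitaryGroup_iff).mp (hA.eigenvectorUnitary).2
    · exact (Matrix.mem_unitaryGroup_iff').mp (hA.eigenvectorUnitary).2
    · exact hA.spectral_theorem
  obtain ⟨W, hW⟩ : ∃ W : Matrix (Fin N) (Fin N) ℂ,
      W * star W = 1 ∧ star W * W = 1 ∧ B = W * Matrix.diagonal w * star W := by
    refine ⟨(hB.eigenvectorUnitary : Matrix (Fin N) (Fin N) ℂ), ?_, ?_, ?_⟩
    · exact (Matrix.mem_unitaryGroup_iff).mp (hB.eigenvectorUnitary).2
    · exact (Matrix.mem_unitaryGroup_iff').mp (hB.eigenvectorUnitary).2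
    · exact hB.spectral_theorem
  have trA : ∀ k : ℕ, (A ^ k).trace = ∑ i, v i ^ k := by
    intro k
    rw [hU.2.2, conj_pow _ _ _ hU.1 hU.2.1, Matrix.trace_mul_cycle, hU.2.1, Matrix.one_mul, Matrix.diagonal_pow, Matrix.trace_diagonal]
    simp [Pi.pow_apply]
  have trB : ∀ k : ℕ, (B ^ k).trace = ∑ i, w i ^ k := by
    intro k
    rw [hW.2.2, conj_pow _ _ _ hW.1 hW.2.1, Matrix.trace_mul_cycle, hW.2.1, Matrix.one_mul, Matrix.diagonal_pow, Matrix.trace_diagonal]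
    simp [Pi.pow_apply]
  have hpsum : ∀ k, 0 < k → ∑ i, v i ^ k = ∑ i, w i ^ k := by
    intro k hk; rw [← trA, ← trB]; exact htr k hk
  have hesymm := esymm_eq_of_psum_eq v w hpsum
  have cpA : A.charpoly = ∏ i, (X - C (v i)) := by
    rw [hU.2.2, charpoly_conj _ _ _ hU.1 hU.2.1, charpoly_diagonal]
  have cpB : B.charpoly = ∏ i, (X - C (w i)) := by
    rw [hW.2.2, charpoly_conj _ _ _ hW.1 hW.2.1, charpoly_diagonal]
  rw [cpA, cpB]
  have expand : ∀ u : Fin N → ℂ, ∏ i, (X - C (u i)) =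
      ((Multiset.map u Finset.univ.val).map fun t => X - C t).prod := by
    intro u
    rw [Multiset.map_map]
    rfl
  rw [expand v, expand w, Multiset.prod_X_sub_X_eq_sum_esymm,
    Multiset.prod_X_sub_X_eq_sum_esymm]
  have hcard : ∀ u : Fin N → ℂ, Multiset.card (Multiset.map u Finset.univ.val) = N := by
    intro u; simp
  rw [hcard v, hcard w]
  refine Finset.sum_congr rfl fun j _ => ?_
  rw [hesymm j]


end Iso

/-- If `G₁, G₂` are finite groups of the same order and `H₁ ⊴ G₁`,
`H₂ ⊴ G₂` are normal subgroups of the same order, then `Γ_{H₁}(G₁)` and `Γ_{H₂}(G₂)`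
are isospectral: the characteristic polynomials of their adjacency matrices coincide. -/
theorem isospectral (G₁ G₂ : Type*) [Group G₁] [Group G₂] [Fintype G₁] [Fintype G₂]
    (H₁ : Subgroup G₁) (H₂ : Subgroup G₂) [H₁.Normal] [H₂.Normal]
    (hG : Fintype.card G₁ = Fintype.card G₂) (hH : Nat.card H₁ = Nat.card H₂) :
    ((Gamma G₁ H₁).adjMatrix ℂ).charpoly = ((Gamma G₂ H₂).adjMatrix ℂ).charpoly := by
  classical
  have hcard : Fintype.card (G₂ × G₂) = Fintype.card (G₁ × G₁) := by
    simp [Fintype.card_prod, hG]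
  let e₁ : (G₁ × G₁) ≃ Fin (Fintype.card (G₁ × G₁)) := Fintype.equivFin _
  let e₂ : (G₂ × G₂) ≃ Fin (Fintype.card (G₁ × G₁)) :=
    (Fintype.equivFin _).trans (finCongr hcard)
  rw [← Matrix.charpoly_reindex e₁ ((Gamma G₁ H₁).adjMatrix ℂ),
      ← Matrix.charpoly_reindex e₂ ((Gamma G₂ H₂).adjMatrix ℂ)]
  apply Iso.charpoly_eq_of_trace_pow
  · rw [Matrix.reindex_apply]; exact (Iso.adj_isHermitian H₁).submatrix _
  · rw [Matrix.reindex_apply]; exact (Iso.adj_isHermitian H₂).submatrix _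
  · intro k _
    rw [Iso.pow_reindex, Iso.pow_reindex, Iso.trace_reindex, Iso.trace_reindex,
      Iso.trace_pow H₁ k, Iso.trace_pow H₂ k, hG, hH]
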